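/- arXiv:1302.4093 — 3 statements merged into one kernel-verified Lean document; each statement's English description precedes it below -/
import Mathlib

section
/- Pointwise exponential decay of radial energy functions: for every integer N ≥ 2 and every r₀ > 0 there exists a constant C(r₀,N) > 0 such that every v ∈ H¹_rad satisfies |v(r)| ≤ C(r₀,N) ‖v‖_{H¹} e^{−(N−1)r/2} for all r ≥ r₀. -/
open MeasureTheory Set Filter Topology

/-- Membership in the radial energy space `H¹_rad` on hyperbolic space `ℍ^N`:
`v` is locally absolutely continuous on `(0,∞)` (expressed via the fundamental theorem
of calculus for its a.e. derivative) and both `v` and `v'` are square-integrable with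
respect to the weight `(sinh s)^(N-1)`. -/
def MemH1rad (N : ℕ) (v : ℝ → ℝ) : Prop :=
  (∀ a b : ℝ, 0 < a → a ≤ b → v b - v a = ∫ s in a..b, deriv v s) ∧
  MeasureTheory.IntegrableOn (fun s => (v s) ^ 2 * Real.sinh s ^ (N - 1)) (Set.Ioi 0) ∧
  MeasureTheory.IntegrableOn (fun s => (deriv v s) ^ 2 * Real.sinh s ^ (N - 1)) (Set.Ioi 0)

/-- The squared `H¹` norm `‖v‖_2² + ‖v'‖_2²` with weight `(sinh s)^(N-1)`. -/
noncomputable def H1normSq (N : ℕ) (v : ℝ → ℝ) : ℝ :=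
  (∫ s in Set.Ioi (0:ℝ), (v s) ^ 2 * Real.sinh s ^ (N - 1)) +
  (∫ s in Set.Ioi (0:ℝ), (deriv v s) ^ 2 * Real.sinh s ^ (N - 1))

/-! For `s ≥ r₀` one has `sinh s ≥ c(r₀) eˢ`, so the inverse weight `(sinh s)^{-(N-1)}` is
integrable on `(r, ∞)` with integral `≲ e^{-(N-1) r}`. Since `v² (sinh s)^{N-1}` is integrable,
`v` takes arbitrarily small values beyond `r`, hence `|v r| ≤ ∫_r^∞ |v'|`, and the weighted
Cauchy–Schwarz inequality bounds this by `‖v'‖₂ (∫_r^∞ (sinh s)^{-(N-1)} ds)^{1/2}`. -/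

open Real

lemma le_sqrt_mul_sqrt_of_forall_two_mul_le {x a b : ℝ} (ha : 0 ≤ a) (hb : 0 ≤ b)
    (h : ∀ ε > 0, 2 * x ≤ ε * a + b / ε) : x ≤ √a * √b := by
  -- `ε = (√b + η) / (√a + η)` approximates the optimal `ε = √(b / a)`, which may not exist
  refine le_of_forall_pos_le_add fun δ hδ => ?_
  set η := δ / (√a + √b + 1)
  have hη : 0 < η := by positivity
  have hηδ : η * (√a + √b) ≤ δ := by
    rw [div_mul_eq_mul_div, div_le_iff₀ (by positivity)]
    nlinarith [Real.sqrt_nonneg a, Real.sqrt_nonneg b]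
  have hs : 0 < √a + η := by positivity
  have ht : 0 < √b + η := by positivity
  have hsa : a / (√a + η) ≤ √a := by
    rw [div_le_iff₀ hs]; nlinarith [Real.sq_sqrt ha, Real.sqrt_nonneg a]
  have htb : b / (√b + η) ≤ √b := by
    rw [div_le_iff₀ ht]; nlinarith [Real.sq_sqrt hb, Real.sqrt_nonneg b]
  have key := h ((√b + η) / (√a + η)) (by positivity)
  calc x ≤ ((√b + η) * (a / (√a + η)) + (√a + η) * (b / (√b + η))) / 2 := by
        rw [div_div_eq_mul_div] at key
        have : (√b + η) / (√a + η) * a = (√b + η) * (a / (√a + η)) := by ring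
        have h2 : b * (√a + η) / (√b + η) = (√a + η) * (b / (√b + η)) := by ring
        linarith
    _ ≤ ((√b + η) * √a + (√a + η) * √b) / 2 := by gcongr
    _ ≤ √a * √b + δ := by linarith

lemma two_mul_abs_le_mul_sq_add_inv {d t : ℝ} (ht : 0 < t) : 2 * |d| ≤ t * d ^ 2 + t⁻¹ := by
  have h := two_mul_le_add_sq (t * |d|) 1
  rw [mul_pow, sq_abs, one_pow, mul_one] at h
  have : t * d ^ 2 + t⁻¹ = (t ^ 2 * d ^ 2 + 1) / t := by field_simp
  rw [this, le_div_iff₀ ht]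
  linarith

lemma integrable_and_integral_abs_le_sqrt_mul_sqrt {α : Type*} [MeasurableSpace α]
    {μ : Measure α} {f w : α → ℝ}
    (hf : AEStronglyMeasurable f μ) (hw : ∀ᵐ x ∂μ, 0 < w x)
    (hfw : Integrable (fun x => f x ^ 2 * w x) μ) (hw_inv : Integrable (fun x => (w x)⁻¹) μ) :
    Integrable f μ ∧ ∫ x, |f x| ∂μ ≤ √(∫ x, f x ^ 2 * w x ∂μ) * √(∫ x, (w x)⁻¹ ∂μ) := by
  have hpt : ∀ ε > 0, ∀ᵐ x ∂μ, 2 * |f x| ≤ ε * (f x ^ 2 * w x) + (w x)⁻¹ / ε := by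
    intro ε hε
    filter_upwards [hw] with x hx
    have := two_mul_abs_le_mul_sq_add_inv (d := f x) (mul_pos hε hx)
    calc 2 * |f x| ≤ ε * w x * f x ^ 2 + (ε * w x)⁻¹ := this
      _ = ε * (f x ^ 2 * w x) + (w x)⁻¹ / ε := by ring
  have hdom : ∀ ε > 0, Integrable (fun x => ε * (f x ^ 2 * w x) + (w x)⁻¹ / ε) μ := fun ε _ =>
    (hfw.const_mul ε).add (hw_inv.div_const ε)
  have hf_int : Integrable f μ := by
    refine (hdom 1 one_pos).mono' hf ?_
    filter_upwards [hpt 1 one_pos, hw] with x hx hwx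
    have : 0 ≤ f x ^ 2 * w x := by positivity
    have : 0 ≤ (w x)⁻¹ := by positivity
    rw [Real.norm_eq_abs]
    linarith [abs_nonneg (f x)]
  refine ⟨hf_int, le_sqrt_mul_sqrt_of_forall_two_mul_le
    (integral_nonneg_of_ae (hw.mono fun x hx => by positivity))
    (integral_nonneg_of_ae (hw.mono fun x hx => by positivity)) fun ε hε => ?_⟩
  -- AM–GM, `2|f| ≤ ε f² w + 1/(ε w)`, integrated and then optimized over `ε`
  calc 2 * ∫ x, |f x| ∂μ = ∫ x, 2 * |f x| ∂μ := (integral_const_mul _ _).symm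
    _ ≤ ∫ x, ε * (f x ^ 2 * w x) + (w x)⁻¹ / ε ∂μ :=
      integral_mono_ae (hf_int.abs.const_mul 2) (hdom ε hε) (hpt ε hε)
    _ = ε * ∫ x, f x ^ 2 * w x ∂μ + (∫ x, (w x)⁻¹ ∂μ) / ε := by
      rw [integral_add (hfw.const_mul ε) (hw_inv.div_const ε), integral_const_mul,
        integral_div]

noncomputable def sinhExpCoeff (r₀ : ℝ) : ℝ := (1 - exp (-(2 * r₀))) / 2

lemma sinhExpCoeff_pos {r₀ : ℝ} (hr₀ : 0 < r₀) : 0 < sinhExpCoeff r₀ := by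
  have : exp (-(2 * r₀)) < 1 := exp_lt_one_iff.2 (by linarith)
  unfold sinhExpCoeff
  linarith

lemma sinhExpCoeff_mul_exp_le_sinh {r₀ s : ℝ} (hs : r₀ ≤ s) :
    sinhExpCoeff r₀ * exp s ≤ sinh s := by
  have hexp : exp (-s) = exp s * exp (-(2 * s)) := by rw [← exp_add]; ring_nf
  have hmono : exp (-(2 * s)) ≤ exp (-(2 * r₀)) := exp_le_exp.2 (by linarith)
  rw [sinh_eq, hexp, sinhExpCoeff]
  nlinarith [exp_pos s]

lemma inv_sinh_pow_le {r₀ s : ℝ} (m : ℕ) (hr₀ : 0 < r₀) (hs : r₀ ≤ s) :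
    (sinh s ^ m)⁻¹ ≤ (sinhExpCoeff r₀ ^ m)⁻¹ * exp (-m * s) := by
  have hc := sinhExpCoeff_pos hr₀
  calc (sinh s ^ m)⁻¹ ≤ ((sinhExpCoeff r₀ * exp s) ^ m)⁻¹ :=
        inv_anti₀ (by positivity) (pow_le_pow_left₀ (by positivity)
          (sinhExpCoeff_mul_exp_le_sinh hs) m)
    _ = (sinhExpCoeff r₀ ^ m)⁻¹ * exp (-m * s) := by
        rw [mul_pow, mul_inv, ← exp_nat_mul, ← exp_neg, neg_mul]

lemma integrableOn_inv_sinh_pow_Ioi_and_integral_le {m : ℕ} {r₀ r : ℝ} (hm : 0 < m)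
    (hr₀ : 0 < r₀) (hr : r₀ ≤ r) :
    IntegrableOn (fun s => (sinh s ^ m)⁻¹) (Ioi r) ∧
      ∫ s in Ioi r, (sinh s ^ m)⁻¹ ≤ (sinhExpCoeff r₀ ^ m)⁻¹ * (exp (-m * r) / m) := by
  have hneg : -(m : ℝ) < 0 := by simp [hm]
  have hexp : IntegrableOn (fun s => (sinhExpCoeff r₀ ^ m)⁻¹ * exp (-m * s)) (Ioi r) :=
    (integrableOn_exp_mul_Ioi hneg r).const_mul _
  have hle : ∀ s ∈ Ioi r, (sinh s ^ m)⁻¹ ≤ (sinhExpCoeff r₀ ^ m)⁻¹ * exp (-m * s) :=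
    fun s hs => inv_sinh_pow_le m hr₀ (hr.trans (le_of_lt hs))
  have hint : IntegrableOn (fun s => (sinh s ^ m)⁻¹) (Ioi r) := by
    refine hexp.mono' ((continuous_sinh.pow m).measurable.inv.aestronglyMeasurable) ?_
    filter_upwards [self_mem_ae_restrict measurableSet_Ioi] with s hs
    have : 0 < sinh s := sinh_pos_iff.2 (hr₀.trans_le (hr.trans (le_of_lt hs)))
    rw [Real.norm_of_nonneg (by positivity)]
    exact hle s hs
  refine ⟨hint, (setIntegral_mono_on hint hexp measurableSet_Ioi hle).trans_eq ?_⟩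
  rw [integral_const_mul, integral_exp_mul_Ioi hneg, neg_div_neg_eq]

lemma exists_gt_abs_lt_of_integrableOn_Ioi {f : ℝ → ℝ} {a δ : ℝ}
    (hf : IntegrableOn f (Ioi a)) (hδ : 0 < δ) : ∃ x > a, |f x| < δ := by
  by_contra! h
  have hconst : IntegrableOn (fun _ => δ) (Ioi a) := by
    refine hf.norm.mono' aestronglyMeasurable_const ?_
    filter_upwards [self_mem_ae_restrict measurableSet_Ioi] with x hx
    simpa [abs_of_pos hδ] using h x hx
  rw [integrableOn_const_iff, Real.volume_Ioi] at hconst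
  simp only [enorm_eq_zero, lt_self_iff_false, or_false] at hconst
  linarith

lemma exists_gt_abs_lt_of_integrableOn_sq_mul {v w : ℝ → ℝ} {a w₀ δ : ℝ} (hw₀ : 0 < w₀)
    (hw : ∀ x > a, w₀ ≤ w x) (hvw : IntegrableOn (fun x => v x ^ 2 * w x) (Ioi a))
    (hδ : 0 < δ) : ∃ x > a, |v x| < δ := by
  obtain ⟨x, hx, hsmall⟩ :=
    exists_gt_abs_lt_of_integrableOn_Ioi hvw (by positivity : 0 < δ ^ 2 * w₀)
  refine ⟨x, hx, abs_lt_of_sq_lt_sq ?_ hδ.le⟩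
  have : v x ^ 2 * w₀ ≤ v x ^ 2 * w x := mul_le_mul_of_nonneg_left (hw x hx) (sq_nonneg _)
  have := (le_abs_self _).trans_lt hsmall
  nlinarith

lemma abs_le_integral_Ioi_abs_of_forall_sub_eq {v v' : ℝ → ℝ} {r : ℝ}
    (hftc : ∀ b ≥ r, v b - v r = ∫ s in r..b, v' s) (hsmall : ∀ δ > 0, ∃ b > r, |v b| < δ)
    (hv' : IntegrableOn v' (Ioi r)) : |v r| ≤ ∫ s in Ioi r, |v' s| := by
  refine le_of_forall_pos_le_add fun δ hδ => ?_
  obtain ⟨b, hb, hvb⟩ := hsmall δ hδ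
  have hint : |∫ s in r..b, v' s| ≤ ∫ s in Ioi r, |v' s| := by
    rw [intervalIntegral.integral_of_le hb.le]
    refine (abs_integral_le_integral_abs).trans (setIntegral_mono_set hv'.abs ?_ ?_)
    · exact Filter.Eventually.of_forall fun s => abs_nonneg _
    · exact Ioc_subset_Ioi_self.eventuallyLE
  calc |v r| = |v b - ∫ s in r..b, v' s| := by rw [← hftc b hb.le, sub_sub_cancel]
    _ ≤ |v b| + |∫ s in r..b, v' s| := abs_sub _ _
    _ ≤ (∫ s in Ioi r, |v' s|) + δ := by linarith

lemma setIntegral_Ioi_deriv_sq_mul_le_H1normSq {N : ℕ} {v : ℝ → ℝ} {r : ℝ} (hv : MemH1rad N v)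
    (hr : 0 ≤ r) :
    ∫ s in Ioi r, deriv v s ^ 2 * sinh s ^ (N - 1) ≤ H1normSq N v := by
  have hweight : ∀ s ∈ Ioi (0 : ℝ), 0 ≤ sinh s ^ (N - 1) :=
    fun s hs => pow_nonneg (sinh_nonneg_iff.2 (le_of_lt hs)) _
  have hv_sq : 0 ≤ ∫ s in Ioi (0 : ℝ), v s ^ 2 * sinh s ^ (N - 1) :=
    setIntegral_nonneg measurableSet_Ioi fun s hs => mul_nonneg (sq_nonneg _) (hweight s hs)
  have hrestrict : ∫ s in Ioi r, deriv v s ^ 2 * sinh s ^ (N - 1) ≤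
      ∫ s in Ioi 0, deriv v s ^ 2 * sinh s ^ (N - 1) := by
    refine setIntegral_mono_set hv.2.2 ?_ (Ioi_subset_Ioi hr).eventuallyLE
    filter_upwards [self_mem_ae_restrict measurableSet_Ioi] with s hs
    exact mul_nonneg (sq_nonneg _) (hweight s hs)
  rw [H1normSq]
  linarith

/-- Pointwise exponential decay of radial energy functions. -/
theorem radial_energy_pointwise_decay
    (N : ℕ) (hN : 2 ≤ N) (r₀ : ℝ) (hr₀ : 0 < r₀) :
    ∃ C > (0:ℝ), ∀ v : ℝ → ℝ, MemH1rad N v → ∀ r ≥ r₀,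
      |v r| ≤ C * Real.sqrt (H1normSq N v) * Real.exp (-((N : ℝ) - 1) * r / 2) := by
  set m := N - 1
  have hm : 0 < m := by omega
  have hm_cast : (N : ℝ) - 1 = m := by rw [Nat.cast_sub (by omega), Nat.cast_one]
  have hc := sinhExpCoeff_pos hr₀
  refine ⟨(√(m * sinhExpCoeff r₀ ^ m))⁻¹, by positivity, fun v hv r hr => ?_⟩
  have hr_pos : 0 < r := hr₀.trans_le hr
  have hsinh_pos : ∀ s > r, 0 < sinh s := fun s hs => sinh_pos_iff.2 (hr_pos.trans hs)
  obtain ⟨hinv_int, hinv_le⟩ := integrableOn_inv_sinh_pow_Ioi_and_integral_le hm hr₀ hr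
  obtain ⟨hderiv_int, hderiv_le⟩ := integrable_and_integral_abs_le_sqrt_mul_sqrt
    (measurable_deriv v).aestronglyMeasurable
    ((ae_restrict_iff' measurableSet_Ioi).2 (.of_forall fun s hs => pow_pos (hsinh_pos s hs) m))
    (hv.2.2.mono_set (Ioi_subset_Ioi hr_pos.le)) hinv_int
  have hsmall : ∀ δ > 0, ∃ b > r, |v b| < δ := fun δ hδ =>
    exists_gt_abs_lt_of_integrableOn_sq_mul (pow_pos (sinh_pos_iff.2 hr_pos) m)
      (fun s hs => pow_le_pow_left₀ (sinh_nonneg_iff.2 hr_pos.le) (sinh_le_sinh.2 hs.le) m)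
      (hv.2.1.mono_set (Ioi_subset_Ioi hr_pos.le)) hδ
  calc |v r| ≤ ∫ s in Ioi r, |deriv v s| :=
        abs_le_integral_Ioi_abs_of_forall_sub_eq (fun b hb => hv.1 r b hr_pos hb) hsmall
          hderiv_int
    _ ≤ √(H1normSq N v) * √((sinhExpCoeff r₀ ^ m)⁻¹ * (exp (-m * r) / m)) :=
        hderiv_le.trans (by gcongr; exact setIntegral_Ioi_deriv_sq_mul_le_H1normSq hv hr_pos.le)
    _ = (√(m * sinhExpCoeff r₀ ^ m))⁻¹ * √(H1normSq N v) * exp (-((N : ℝ) - 1) * r / 2) := by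
        rw [hm_cast, exp_half, inv_mul_eq_div, div_div, sqrt_div' _ (by positivity)]
        ring
end

section
/- Preliminary lower bound at fixed time: let m ∈ (0,1) and let u be a radial energy solution of the fast diffusion equation with exponent m and extinction time T > 0. Then for every α > N−1 and every t* ∈ (0,T) there exists a constant P > 0 (depending on t*, α, u_0, m, N) such that u(r,t*) ≥ P e^{−α r/m} for all r ≥ 0. -/
open MeasureTheory Set Filter Topology

/-- A radial energy solution of the fast diffusion equation `u_t = Δ(u^m)` on `ℍ^N`,
with exponent `m`, extinction time `T` (initial datum `u(·,0)`). -/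
structure IsRadialEnergySolution (N : ℕ) (m T : ℝ) (u : ℝ → ℝ → ℝ) : Prop where
  continuousOn : ContinuousOn (fun p : ℝ × ℝ => u p.1 p.2) (Set.Ici 0 ×ˢ Set.Icc 0 T)
  nonneg : ∀ r ∈ Set.Ici (0:ℝ), ∀ t ∈ Set.Icc (0:ℝ) T, 0 ≤ u r t
  smooth : ContDiffOn ℝ (⊤ : ℕ∞) (fun p : ℝ × ℝ => u p.1 p.2) (Set.Ici 0 ×ˢ Set.Ioo 0 T)
  pos : ∀ r ∈ Set.Ici (0:ℝ), ∀ t ∈ Set.Ioo (0:ℝ) T, 0 < u r t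
  pde : ∀ r > (0:ℝ), ∀ t ∈ Set.Ioo (0:ℝ) T,
    deriv (fun τ => u r τ) t
      = deriv (deriv (fun ρ => u ρ t ^ m)) r
        + ((N : ℝ) - 1) * (Real.cosh r / Real.sinh r) * deriv (fun ρ => u ρ t ^ m) r
  neumann : ∀ t ∈ Set.Ioo (0:ℝ) T, deriv (fun ρ => u ρ t ^ m) 0 = 0
  extinction : ∀ r ∈ Set.Ici (0:ℝ), u r T = 0
  energy : ∀ t ∈ Set.Ioo (0:ℝ) T, MemH1rad N (fun ρ => u ρ t ^ m)
  energy_bdd : ∀ ε ∈ Set.Ioo (0:ℝ) T, ∃ C : ℝ, ∀ t ∈ Set.Ico ε T,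
    H1normSq N (fun ρ => u ρ t ^ m) ≤ C
  init_bdd : ∃ M : ℝ, ∀ r ∈ Set.Ici (0:ℝ), u r 0 ≤ M
  init_nonzero : ∃ r ∈ Set.Ici (0:ℝ), u r 0 ≠ 0
  init_energy : MemH1rad N (fun ρ => u ρ 0 ^ m)


/-- One-sided first derivative test: left max implies nonneg derivative. -/
lemma deriv_nonneg_of_left_max {f : ℝ → ℝ} {a t d : ℝ} (hat : a < t)
    (hmax : ∀ s ∈ Set.Icc a t, f s ≤ f t) (hd : HasDerivAt f d t) : 0 ≤ d := by
  by_contra h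
  push_neg at h
  rw [hasDerivAt_iff_tendsto_slope] at hd
  have ev : ∀ᶠ y in 𝓝[≠] t, slope f t y < 0 := hd.eventually (eventually_lt_nhds h)
  have ev' : ∀ᶠ y in 𝓝[<] t, slope f t y < 0 :=
    ev.filter_mono (nhdsWithin_mono t fun y hy => ne_of_lt hy)
  have eva : ∀ᶠ y in 𝓝[<] t, a < y :=
    eventually_nhdsWithin_of_eventually_nhds (eventually_gt_nhds hat)
  have evi : ∀ᶠ y in 𝓝[<] t, y ∈ Iio t := eventually_mem_nhdsWithin
  obtain ⟨y, ⟨hslope, hay⟩, hyt'⟩ := ((ev'.and eva).and evi).exists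
  have hyt2 : y < t := hyt'
  have h1 : f y ≤ f t := hmax y ⟨hay.le, le_of_lt hyt2⟩
  have h2 : 0 < f y - f t := by
    have : slope f t y * (y - t) > 0 := mul_pos_of_neg_of_neg hslope (by linarith [hyt2])
    rw [slope_def_field] at this
    have := this
    rw [div_mul_cancel₀] at this
    · linarith
    · exact sub_ne_zero.2 (ne_of_lt hyt2)

  linarith

/-- Second derivative test at a max over an open set. -/
lemma secondDeriv_nonpos_of_isMaxOn {f : ℝ → ℝ} {U : Set ℝ} {x : ℝ} (hU : IsOpen U)
    (hx : x ∈ U) (hf : ContDiffOn ℝ (⊤ : ℕ∞) f U) (hmax : ∀ y ∈ U, f y ≤ f x) :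
    deriv (deriv f) x ≤ 0 := by
  have hloc : IsLocalMax f x := Filter.eventually_of_mem (hU.mem_nhds hx) hmax
  have h1 : deriv f x = 0 := hloc.deriv_eq_zero
  have hf' : ContDiffOn ℝ (⊤ : ℕ∞) (deriv f) U := by
    exact ((contDiffOn_infty_iff_deriv_of_isOpen hU).1 hf).2
  by_contra hc
  push_neg at hc
  have hd' : HasDerivAt (deriv f) (deriv (deriv f) x) x :=
    (((hf'.differentiableOn (by simp)) x hx).differentiableAt (hU.mem_nhds hx)).hasDerivAt
  rw [hasDerivAt_iff_tendsto_slope] at hd'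
  have ev : ∀ᶠ y in 𝓝[≠] x, 0 < slope (deriv f) x y := hd'.eventually (eventually_gt_nhds hc)
  have ev' : ∀ᶠ y in 𝓝[>] x, 0 < slope (deriv f) x y :=
    ev.filter_mono (nhdsWithin_mono x fun y hy => ne_of_gt hy)
  have evU : ∀ᶠ y in 𝓝[>] x, y ∈ U :=
    eventually_nhdsWithin_of_eventually_nhds (hU.eventually_mem hx)
  obtain ⟨z, hz, hsub⟩ := mem_nhdsGT_iff_exists_Ioo_subset.1 (ev'.and evU)
  have hz' : x < z := hz
  set y₀ := x + (z - x) / 2 with hy₀def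
  have hy₀ : y₀ ∈ Set.Ioo x z := by constructor <;> simp [hy₀def] <;> linarith
  have hIccU : Set.Icc x y₀ ⊆ U := by
    intro p hp
    rcases eq_or_lt_of_le hp.1 with h | h
    · exact h ▸ hx
    · exact (hsub ⟨h, lt_of_le_of_lt hp.2 hy₀.2⟩).2
  have hpos : ∀ p ∈ Set.Ioo x y₀, 0 < deriv f p := by
    intro p hp
    have hpz : p ∈ Set.Ioo x z := ⟨hp.1, lt_trans hp.2 hy₀.2⟩
    have hs := (hsub hpz).1
    have : deriv f p = slope (deriv f) x p * (p - x) := by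
      rw [slope_def_field, div_mul_cancel₀, h1, sub_zero]
      exact sub_ne_zero.2 (ne_of_gt hp.1)
    rw [this]
    exact mul_pos hs (by linarith [hp.1])
  have hmono : StrictMonoOn f (Set.Icc x y₀) := by
    apply strictMonoOn_of_deriv_pos (convex_Icc x y₀)
    · exact (hf.continuousOn.mono hIccU)
    · intro p hp
      rw [interior_Icc] at hp
      exact hpos p hp
  have hxy : f x < f y₀ :=
    hmono (Set.left_mem_Icc.2 (le_of_lt hy₀.1)) (Set.right_mem_Icc.2 (le_of_lt hy₀.1)) hy₀.1
  exact absurd (hmax y₀ (hIccU (Set.right_mem_Icc.2 (le_of_lt hy₀.1)))) (not_le.2 hxy)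

/-- Eventually `coth r ≤ 1 + ε`. -/
lemma exists_coth_bound {ε : ℝ} (hε : 0 < ε) :
    ∃ r₀ : ℝ, 1 ≤ r₀ ∧ ∀ r, r₀ ≤ r → Real.cosh r / Real.sinh r ≤ 1 + ε := by
  have hs1 : 0 < Real.sinh 1 := Real.sinh_pos_iff.2 one_pos
  refine ⟨max 1 (-Real.log (ε * Real.sinh 1)), le_max_left _ _, fun r hr => ?_⟩
  have hr1 : 1 ≤ r := le_trans (le_max_left _ _) hr
  have hsr : Real.sinh 1 ≤ Real.sinh r := Real.sinh_le_sinh.2 hr1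
  have hsrpos : 0 < Real.sinh r := lt_of_lt_of_le hs1 hsr
  have hexp : Real.exp (-r) ≤ ε * Real.sinh 1 := by
    have h2 : -Real.log (ε * Real.sinh 1) ≤ r := le_trans (le_max_right _ _) hr
    have h3 : Real.log (ε * Real.sinh 1) ≥ -r := by linarith
    calc Real.exp (-r) ≤ Real.exp (Real.log (ε * Real.sinh 1)) := Real.exp_le_exp.2 h3
      _ = ε * Real.sinh 1 := Real.exp_log (by positivity)
  have hcosh : Real.cosh r = Real.sinh r + Real.exp (-r) := by
    have := Real.cosh_sub_sinh r; linarith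
  rw [hcosh, add_div, div_self (ne_of_gt hsrpos)]
  have : Real.exp (-r) / Real.sinh r ≤ ε := by
    rw [div_le_iff₀ hsrpos]
    calc Real.exp (-r) ≤ ε * Real.sinh 1 := hexp
      _ ≤ ε * Real.sinh r := by nlinarith
  linarith

/-- The key algebraic inequality for the barrier argument. -/
lemma key_barrier_ineq {m δ A b p q : ℝ} (hm0 : 0 < m) (hm1 : m < 1)
    (hb : b = m / (1 - m)) (hδ : 0 < δ) (hA : 0 < A) (hp : 0 < p) (hq : 0 < q) (hq1 : q ≤ 1)
    (hAδ : b * A ^ ((1 - m) / m) ≤ m * δ) :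
    A * b * p ^ (b - 1) * q ≤ δ * (A * p ^ b * q) * (m * ((A * p ^ b * q) ^ m⁻¹) ^ (m - 1)) := by
  have hm' : (1 : ℝ) - m > 0 := by linarith
  have hpb : (0:ℝ) < p ^ b := Real.rpow_pos_of_pos hp b
  have hΦ : (0:ℝ) < A * p ^ b * q := by positivity
  set Φ := A * p ^ b * q with hΦdef
  have e1 : (Φ ^ m⁻¹) ^ (m - 1) = Φ ^ ((m - 1) / m) := by
    rw [← Real.rpow_mul hΦ.le, div_eq_mul_inv, mul_comm]
  have e2 : Φ * Φ ^ ((m - 1) / m) = Φ ^ (1 + (m - 1) / m) := by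
    rw [Real.rpow_add hΦ, Real.rpow_one]
  set s : ℝ := (m - 1) / m with hsdef
  have hs_nonpos : s ≤ 0 := by
    rw [hsdef]
    apply div_nonpos_of_nonpos_of_nonneg <;> linarith
  have e3 : Φ ^ (1 + s) = A ^ (1 + s) * (p ^ b) ^ (1 + s) * q ^ (1 + s) := by
    rw [hΦdef, Real.mul_rpow (by positivity) hq.le, Real.mul_rpow hA.le hpb.le]
  have e4 : (p ^ b) ^ (1 + s) = p ^ (b - 1) := by
    rw [← Real.rpow_mul hp.le]
    congr 1
    rw [hb, hsdef]
    field_simp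
    ring
  have e5 : q ≤ q ^ (1 + s) := by
    have : q ^ (1 + s) = q * q ^ s := by rw [Real.rpow_add hq, Real.rpow_one]
    rw [this]
    nlinarith [Real.one_le_rpow_of_pos_of_le_one_of_nonpos hq hq1 hs_nonpos]
  have e6 : A ^ (1 + s) = A / A ^ ((1 - m) / m) := by
    rw [Real.rpow_add hA, Real.rpow_one]
    congr 1
    rw [← Real.rpow_neg hA.le]
    congr 1
    rw [hsdef]
    field_simp
    ring
  have hX : (0:ℝ) < A ^ ((1 - m) / m) := Real.rpow_pos_of_pos hA _
  set X := A ^ ((1 - m) / m) with hXdef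
  have hAb : A * b ≤ δ * m * (A / X) := by
    have h : b * X * (A * X⁻¹) ≤ m * δ * (A * X⁻¹) :=
      mul_le_mul_of_nonneg_right hAδ (by positivity)
    have hXX : X * X⁻¹ = 1 := mul_inv_cancel₀ hX.ne'
    calc A * b = A * b * (X * X⁻¹) := by rw [hXX]; ring
      _ = b * X * (A * X⁻¹) := by ring
      _ ≤ m * δ * (A * X⁻¹) := h
      _ = δ * m * (A / X) := by rw [div_eq_mul_inv]; ring
  have hb0 : 0 < b := by rw [hb]; positivity
  calc A * b * p ^ (b - 1) * q ≤ (δ * m * (A / X)) * (p ^ (b - 1) * q) := by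
        have hpb1 : (0:ℝ) < p ^ (b - 1) := Real.rpow_pos_of_pos hp _
        nlinarith [mul_le_mul_of_nonneg_right hAb (le_of_lt (mul_pos hpb1 hq))]
    _ ≤ (δ * m * (A / X)) * (p ^ (b - 1) * q ^ (1 + s)) := by
        have hpb1 : (0:ℝ) < p ^ (b - 1) := Real.rpow_pos_of_pos hp _
        have hpos : 0 < δ * m * (A / X) := by positivity
        have := mul_le_mul_of_nonneg_left (mul_le_mul_of_nonneg_left e5 hpb1.le) hpos.le
        linarith [this]
    _ = δ * Φ * (m * Φ ^ s) := by
        have e7 : Φ ^ (1 + s) = A / X * (p ^ (b - 1) * q ^ (1 + s)) := by rw [e3, e4, e6]; ring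
        calc δ * m * (A / X) * (p ^ (b - 1) * q ^ (1 + s))
            = δ * m * (A / X * (p ^ (b - 1) * q ^ (1 + s))) := by ring
          _ = δ * m * (Φ ^ (1 + s)) := by rw [e7]
          _ = δ * m * (Φ * Φ ^ s) := by rw [e2]
          _ = δ * Φ * (m * Φ ^ s) := by ring
    _ = δ * Φ * (m * (Φ ^ m⁻¹) ^ (m - 1)) := by rw [e1]


set_option maxHeartbeats 2000000 in
/-- Preliminary lower bound at any fixed time, with rate `e^{-αr/m}` for any `α > N-1`. -/
theorem preliminary_lower_bound_fixed_time
    (N : ℕ) (hN : 2 ≤ N) (m T : ℝ)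
    (hm : m ∈ Set.Ioo (0:ℝ) 1) (hT : 0 < T)
    (u : ℝ → ℝ → ℝ) (hu : IsRadialEnergySolution N m T u) :
    ∀ α > ((N : ℝ) - 1), ∀ ts ∈ Set.Ioo (0:ℝ) T, ∃ P > (0:ℝ), ∀ r ∈ Set.Ici (0:ℝ),
      P * Real.exp (-α * r / m) ≤ u r ts := by
  obtain ⟨hm0, hm1⟩ := hm
  intro α hα ts hts
  obtain ⟨hts0, htsT⟩ := hts
  have hN1 : (1:ℝ) ≤ (N:ℝ) - 1 := by
    have : (2:ℝ) ≤ (N:ℝ) := by exact_mod_cast hN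
    linarith
  have hα0 : (0:ℝ) < α := by linarith
  -- constants
  set ε₁ : ℝ := (α - ((N:ℝ) - 1)) / (2 * ((N:ℝ) - 1)) with hε₁def
  have hε₁ : 0 < ε₁ := div_pos (by linarith) (by linarith)
  set δ : ℝ := α * (α - ((N:ℝ) - 1)) / 2 with hδdef
  have hδ : 0 < δ := by
    rw [hδdef]; nlinarith
  obtain ⟨r₀, hr₀1, hcoth⟩ := exists_coth_bound hε₁
  have hr₀0 : (0:ℝ) < r₀ := by linarith
  have hcoth2 : ∀ r, r₀ ≤ r → δ ≤ α * α - ((N:ℝ) - 1) * (Real.cosh r / Real.sinh r) * α := by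
    intro r hr
    have h := hcoth r hr
    have hsinh : 0 < Real.sinh r := Real.sinh_pos_iff.2 (by linarith)
    have hc0 : 0 ≤ Real.cosh r / Real.sinh r := le_of_lt (div_pos (Real.cosh_pos r) hsinh)
    have h2 : ((N:ℝ) - 1) * (Real.cosh r / Real.sinh r) ≤ ((N:ℝ) - 1) * (1 + ε₁) :=
      mul_le_mul_of_nonneg_left h (by linarith)
    have hε₁eq : ((N:ℝ) - 1) * ε₁ = (α - ((N:ℝ) - 1)) / 2 := by
      rw [hε₁def]; field_simp
    rw [hδdef]
    nlinarith [h2]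
  -- times
  set t0 : ℝ := ts / 2 with ht0def
  set t1 : ℝ := (ts + T) / 2 with ht1def
  have ht00 : 0 < t0 := by rw [ht0def]; linarith
  have ht0ts : t0 < ts := by rw [ht0def]; linarith
  have htst1 : ts < t1 := by rw [ht1def]; linarith
  have ht1T : t1 < T := by rw [ht1def]; linarith
  have ht01 : t0 < t1 := lt_trans ht0ts htst1
  set b : ℝ := m / (1 - m) with hbdef
  have hb0 : 0 < b := by rw [hbdef]; exact div_pos hm0 (by linarith)
  -- minimum of u(r₀, ·)^m on [t0, t1]
  have hsubIoo : Set.Icc t0 t1 ⊆ Set.Ioo 0 T := fun t ht => ⟨lt_of_lt_of_le ht00 ht.1, lt_of_le_of_lt ht.2 ht1T⟩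
  have hsubIcc : Set.Icc t0 t1 ⊆ Set.Icc 0 T := fun t ht => ⟨le_of_lt (lt_of_lt_of_le ht00 ht.1), le_of_lt (lt_of_le_of_lt ht.2 ht1T)⟩
  have hcont_u : ContinuousOn (fun t => u r₀ t ^ m) (Set.Icc t0 t1) := by
    apply ContinuousOn.rpow_const
    · have hmap : Set.MapsTo (fun t : ℝ => (r₀, t)) (Set.Icc t0 t1) (Set.Ici 0 ×ˢ Set.Icc 0 T) :=
        fun t ht => ⟨le_of_lt hr₀0, hsubIcc ht⟩
      exact hu.continuousOn.comp ((continuous_const.prodMk continuous_id).continuousOn) hmap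
    · exact fun t _ => Or.inr (le_of_lt hm0)
  obtain ⟨tμ, htμ, hμmin⟩ := isCompact_Icc.exists_isMinOn ⟨t0, Set.left_mem_Icc.2 (le_of_lt ht01)⟩ hcont_u
  set μ : ℝ := u r₀ tμ ^ m with hμdef
  have hμ : 0 < μ := Real.rpow_pos_of_pos (hu.pos r₀ (le_of_lt hr₀0) tμ (hsubIoo htμ)) m
  -- the constant A
  have ht10b : (0:ℝ) < (t1 - t0) ^ b := Real.rpow_pos_of_pos (by linarith) b
  set A : ℝ := min (μ / (t1 - t0) ^ b) ((m * δ / b) ^ (m / (1 - m))) with hAdef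
  have hA : 0 < A := lt_min (div_pos hμ ht10b) (Real.rpow_pos_of_pos (div_pos (mul_pos hm0 hδ) hb0) _)
  have hAμ : A * (t1 - t0) ^ b ≤ μ := by
    have h1 : A ≤ μ / (t1 - t0) ^ b := min_le_left _ _
    calc A * (t1 - t0) ^ b ≤ (μ / (t1 - t0) ^ b) * (t1 - t0) ^ b :=
          mul_le_mul_of_nonneg_right h1 (le_of_lt ht10b)
      _ = μ := by field_simp
  have hAδ : b * A ^ ((1 - m) / m) ≤ m * δ := by
    have hA2 : A ≤ (m * δ / b) ^ (m / (1 - m)) := min_le_right _ _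
    have h1 : A ^ ((1 - m) / m) ≤ ((m * δ / b) ^ (m / (1 - m))) ^ ((1 - m) / m) :=
      Real.rpow_le_rpow (le_of_lt hA) hA2 (le_of_lt (div_pos (by linarith) hm0))
    rw [← Real.rpow_mul (le_of_lt (div_pos (mul_pos hm0 hδ) hb0))] at h1
    have hm1' : (1:ℝ) - m ≠ 0 := by linarith
    have hm0' : m ≠ 0 := ne_of_gt hm0
    have h2 : m / (1 - m) * ((1 - m) / m) = 1 := by
      field_simp
    rw [h2, Real.rpow_one] at h1
    calc b * A ^ ((1 - m) / m) ≤ b * (m * δ / b) := mul_le_mul_of_nonneg_left h1 (le_of_lt hb0)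
      _ = m * δ := by field_simp
  -- the comparison assertion
  have comp : ∀ r, r₀ ≤ r → ∀ t ∈ Set.Icc t0 t1,
      A * (t - t0) ^ b * Real.exp (-(α * r)) ≤ u r t ^ m := by
    by_contra hcon
    push_neg at hcon
    obtain ⟨r₁, hr₁, s₁, hs₁, hW₁⟩ := hcon
    set w : ℝ → ℝ → ℝ := fun r t => A * (t - t0) ^ b * Real.exp (-(α * r)) - u r t ^ m with hwdef
    have hw₁ : 0 < w r₁ s₁ := by simp only [hwdef]; linarith
    set w₁ : ℝ := w r₁ s₁ with hw₁def
    set C : ℝ := A * (t1 - t0) ^ b with hCdef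
    have hC : 0 < C := mul_pos hA ht10b
    set R : ℝ := max (max r₀ r₁) (Real.log (C / w₁) / α + 1) with hRdef
    have hr₀R : r₀ ≤ R := le_trans (le_max_left _ _) (le_max_left _ _)
    have hr₁R : r₁ ≤ R := le_trans (le_max_right _ _) (le_max_left _ _)
    have hwb : ∀ r t, t ∈ Set.Icc t0 t1 → 0 ≤ r → w r t ≤ C * Real.exp (-(α * r)) := by
      intro r t ht hr
      have h1 : 0 ≤ u r t ^ m := Real.rpow_nonneg (hu.nonneg r hr t (hsubIcc ht)) m
      have h2 : (t - t0) ^ b ≤ (t1 - t0) ^ b :=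
        Real.rpow_le_rpow (by linarith [ht.1]) (by linarith [ht.2]) (le_of_lt hb0)
      have h3 : A * (t - t0) ^ b ≤ C := by
        rw [hCdef]; exact mul_le_mul_of_nonneg_left h2 (le_of_lt hA)
      simp only [hwdef]
      have h4 : A * (t - t0) ^ b * Real.exp (-(α * r)) ≤ C * Real.exp (-(α * r)) :=
        mul_le_mul_of_nonneg_right h3 (le_of_lt (Real.exp_pos _))
      linarith
    have htail : ∀ r, R ≤ r → ∀ t ∈ Set.Icc t0 t1, w r t < w₁ := by
      intro r hRr t ht
      have hr0 : (0:ℝ) ≤ r := le_trans (by linarith) hRr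
      have h5 : Real.log (C / w₁) / α + 1 ≤ r := le_trans (le_max_right _ _) hRr
      have h6 : Real.log (C / w₁) + α ≤ α * r := by
        have := mul_le_mul_of_nonneg_left h5 (le_of_lt hα0)
        calc Real.log (C / w₁) + α = α * (Real.log (C / w₁) / α + 1) := by field_simp
          _ ≤ α * r := this
      have h7 : -(α * r) < Real.log (w₁ / C) := by
        have : Real.log (w₁ / C) = -Real.log (C / w₁) := by
          rw [show w₁ / C = (C / w₁)⁻¹ by rw [inv_div], Real.log_inv]
        rw [this]; linarith
      have h8 : Real.exp (-(α * r)) < w₁ / C := by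
        calc Real.exp (-(α * r)) < Real.exp (Real.log (w₁ / C)) := Real.exp_lt_exp.2 h7
          _ = w₁ / C := Real.exp_log (div_pos hw₁ hC)
      have h9 : C * Real.exp (-(α * r)) < w₁ := by
        rw [← lt_div_iff₀' hC]; exact h8
      exact lt_of_le_of_lt (hwb r t ht hr0) h9
    -- maximum over the compact rectangle
    set K : Set (ℝ × ℝ) := Set.Icc r₀ R ×ˢ Set.Icc t0 t1 with hKdef
    have hKne : (r₁, s₁) ∈ K := ⟨⟨hr₁, hr₁R⟩, hs₁⟩
    have hWcont : ContinuousOn (fun p : ℝ × ℝ => w p.1 p.2) K := by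
      apply ContinuousOn.sub
      · apply Continuous.continuousOn
        have hc1 : Continuous fun p : ℝ × ℝ => (p.2 - t0) ^ b :=
          (Real.continuous_rpow_const (le_of_lt hb0)).comp (continuous_snd.sub continuous_const)
        have hc2 : Continuous fun p : ℝ × ℝ => Real.exp (-(α * p.1)) :=
          Real.continuous_exp.comp ((continuous_const.mul continuous_fst).neg)
        exact (continuous_const.mul hc1).mul hc2
      · apply ContinuousOn.rpow_const
        · exact hu.continuousOn.mono fun p hp =>
            ⟨le_trans (le_of_lt hr₀0) hp.1.1, hsubIcc hp.2⟩
        · exact fun p _ => Or.inr (le_of_lt hm0)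
    obtain ⟨pb, hpbK, hpmax⟩ := (isCompact_Icc.prod isCompact_Icc).exists_isMaxOn
      ⟨(r₁, s₁), hKne⟩ hWcont
    obtain ⟨rb, tb⟩ := pb
    have hrbK : rb ∈ Set.Icc r₀ R := hpbK.1
    have htbK : tb ∈ Set.Icc t0 t1 := hpbK.2
    have hM : w₁ ≤ w rb tb := hpmax hKne
    have hMpos : 0 < w rb tb := lt_of_lt_of_le hw₁ hM
    have hglob : ∀ r, r₀ ≤ r → ∀ t ∈ Set.Icc t0 t1, w r t ≤ w rb tb := by
      intro r hr t ht
      by_cases hrR : r ≤ R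
      · exact hpmax (show (r, t) ∈ K from ⟨⟨hr, hrR⟩, ht⟩)
      · push_neg at hrR
        exact le_of_lt (lt_of_lt_of_le (htail r (le_of_lt hrR) t ht) hM)
    -- the max point is interior
    have hwr₀ : ∀ t ∈ Set.Icc t0 t1, w r₀ t ≤ 0 := by
      intro t ht
      have h1 : Real.exp (-(α * r₀)) ≤ 1 := Real.exp_le_one_iff.2 (by nlinarith)
      have h2 : (t - t0) ^ b ≤ (t1 - t0) ^ b :=
        Real.rpow_le_rpow (by linarith [ht.1]) (by linarith [ht.2]) (le_of_lt hb0)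
      have h3 : 0 ≤ (t - t0) ^ b := Real.rpow_nonneg (by linarith [ht.1]) b
      have h4 : A * (t - t0) ^ b * Real.exp (-(α * r₀)) ≤ A * (t1 - t0) ^ b := by
        calc A * (t - t0) ^ b * Real.exp (-(α * r₀)) ≤ A * (t - t0) ^ b * 1 :=
              mul_le_mul_of_nonneg_left h1 (by positivity)
          _ = A * (t - t0) ^ b := mul_one _
          _ ≤ A * (t1 - t0) ^ b := mul_le_mul_of_nonneg_left h2 (le_of_lt hA)
      have h5 : μ ≤ u r₀ t ^ m := hμmin ht
      simp only [hwdef]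
      linarith
    have hrb : r₀ < rb := by
      rcases lt_or_eq_of_le hrbK.1 with h | h
      · exact h
      · exfalso; rw [← h] at hMpos; linarith [hwr₀ tb htbK]
    have htb : t0 < tb := by
      rcases lt_or_eq_of_le htbK.1 with h | h
      · exact h
      · exfalso
        have : w rb t0 = -(u rb t0 ^ m) := by
          simp only [hwdef, sub_self, Real.zero_rpow (ne_of_gt hb0)]
          ring
        rw [← h] at hMpos
        have h6 : 0 ≤ u rb t0 ^ m :=
          Real.rpow_nonneg (hu.nonneg rb (le_trans (le_of_lt hr₀0) hrbK.1) t0 (hsubIcc (Set.left_mem_Icc.2 (le_of_lt ht01)))) m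
        rw [this] at hMpos
        linarith
    -- analysis at the maximum point
    have hrb0 : (0:ℝ) < rb := lt_of_lt_of_le hr₀0 hrbK.1
    have htbIoo : tb ∈ Set.Ioo 0 T := hsubIoo htbK
    have hupos : 0 < u rb tb := hu.pos rb (le_of_lt hrb0) tb htbIoo
    have hsm : ContDiffOn ℝ ((⊤:ℕ∞)) (fun p : ℝ × ℝ => u p.1 p.2) (Set.Ioi 0 ×ˢ Set.Ioo 0 T) :=
      (hu.smooth.of_le (by simp)).mono (Set.prod_mono Set.Ioi_subset_Ici_self subset_rfl)
    have hopen : IsOpen (Set.Ioi (0:ℝ) ×ˢ Set.Ioo (0:ℝ) T) := isOpen_Ioi.prod isOpen_Ioo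
    have hmem : (rb, tb) ∈ Set.Ioi (0:ℝ) ×ˢ Set.Ioo (0:ℝ) T := ⟨hrb0, htbIoo⟩
    have hCAt : ∀ q ∈ Set.Ioi (0:ℝ) ×ˢ Set.Ioo (0:ℝ) T,
        ContDiffAt ℝ ((⊤:ℕ∞)) (fun p : ℝ × ℝ => u p.1 p.2) q :=
      fun q hq => hsm.contDiffAt (hopen.mem_nhds hq)
    have hposev : ∀ᶠ q : ℝ × ℝ in 𝓝 (rb, tb), 0 < u q.1 q.2 :=
      ((hCAt _ hmem).continuousAt).eventually (eventually_gt_nhds hupos)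
    set f : ℝ → ℝ := fun ρ => u ρ tb ^ m with hfdef
    have hfe : ∀ᶠ ρ in 𝓝 rb, ContDiffAt ℝ ((⊤:ℕ∞)) f ρ := by
      have hsl : ContinuousAt (fun ρ : ℝ => (ρ, tb)) rb :=
        (continuous_id.prodMk continuous_const).continuousAt
      have hmemev : ∀ᶠ q : ℝ × ℝ in 𝓝 (rb, tb), q ∈ Set.Ioi (0:ℝ) ×ˢ Set.Ioo (0:ℝ) T :=
        hopen.eventually_mem hmem
      filter_upwards [hsl.eventually hmemev, hsl.eventually hposev] with ρ h1 h2
      have hcd : ContDiffAt ℝ ((⊤:ℕ∞)) (fun ρ' : ℝ => u ρ' tb) ρ :=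
        (hCAt _ h1).comp ρ (contDiffAt_id.prodMk contDiffAt_const)
      exact hcd.rpow_const_of_ne (ne_of_gt h2)
    obtain ⟨V, hVsub, hVopen, hrbV⟩ := eventually_nhds_iff.1 hfe
    have hfV : ContDiffOn ℝ ((⊤:ℕ∞)) f V := fun ρ hρ => (hVsub ρ hρ).contDiffWithinAt
    have hfdiff : ∀ ρ ∈ V, HasDerivAt f (deriv f ρ) ρ := fun ρ hρ =>
      ((hVsub ρ hρ).differentiableAt (by simp)).hasDerivAt
    have hf'V : ContDiffOn ℝ ((⊤:ℕ∞)) (deriv f) V :=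
      ((contDiffOn_infty_iff_deriv_of_isOpen hVopen).1 hfV).2
    have hf'' : HasDerivAt (deriv f) (deriv (deriv f) rb) rb :=
      (((hf'V rb hrbV).differentiableWithinAt (by simp)).differentiableAt
        (hVopen.mem_nhds hrbV)).hasDerivAt
    set c₁ : ℝ := A * (tb - t0) ^ b with hc₁def
    have hc₁ : 0 < c₁ := mul_pos hA (Real.rpow_pos_of_pos (by linarith) b)
    have hEd : ∀ ρ : ℝ, HasDerivAt (fun x : ℝ => c₁ * Real.exp (-(α * x)))
        (c₁ * (Real.exp (-(α * ρ)) * -α)) ρ := by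
      intro ρ
      have h1 : HasDerivAt (fun x : ℝ => -(α * x)) (-α) ρ := by
        simpa [Pi.neg_def] using ((hasDerivAt_id ρ).const_mul α).neg
      exact (h1.exp).const_mul c₁
    have hE2 : HasDerivAt (fun x : ℝ => c₁ * (Real.exp (-(α * x)) * -α))
        (c₁ * (Real.exp (-(α * rb)) * -α * -α)) rb := by
      have h1 : HasDerivAt (fun x : ℝ => -(α * x)) (-α) rb := by
        simpa [Pi.neg_def] using ((hasDerivAt_id rb).const_mul α).neg
      exact ((h1.exp).mul_const (-α)).const_mul c₁
    set g : ℝ → ℝ := fun ρ => c₁ * Real.exp (-(α * ρ)) - f ρ with hgdef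
    have hgw : ∀ ρ, g ρ = w ρ tb := by
      intro ρ; simp only [hgdef, hwdef, hfdef, hc₁def]
    have hgmax : ∀ ρ, r₀ < ρ → g ρ ≤ g rb := by
      intro ρ hρ; rw [hgw, hgw]; exact hglob ρ (le_of_lt hρ) tb htbK
    have hgd : HasDerivAt g (c₁ * (Real.exp (-(α * rb)) * -α) - deriv f rb) rb :=
      (hEd rb).sub (hfdiff rb hrbV)
    have hglocal : IsLocalMax g rb := by
      refine Filter.eventually_of_mem (Ioi_mem_nhds hrb) ?_
      exact fun ρ hρ => hgmax ρ hρ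
    have hg0 : deriv g rb = 0 := hglocal.deriv_eq_zero
    have hfr : deriv f rb = c₁ * Real.exp (-(α * rb)) * -α := by
      have h := hgd.deriv
      rw [hg0] at h
      have h2 : c₁ * Real.exp (-(α * rb)) * -α = c₁ * (Real.exp (-(α * rb)) * -α) := by ring
      linarith only [h, h2.le, h2.ge]
    have hgC : ContDiffOn ℝ ((⊤:ℕ∞)) g (V ∩ Set.Ioi r₀) := by
      apply ContDiffOn.sub
      · apply ContDiff.contDiffOn
        have h1 : ContDiff ℝ ((⊤:ℕ∞)) (fun x : ℝ => -(α * x)) :=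
          (contDiff_const.mul contDiff_id).neg
        exact contDiff_const.mul (Real.contDiff_exp.comp h1)
      · exact hfV.mono Set.inter_subset_left
    have hdd : deriv (deriv g) rb ≤ 0 :=
      secondDeriv_nonpos_of_isMaxOn (hVopen.inter isOpen_Ioi) ⟨hrbV, hrb⟩ hgC
        (fun ρ hρ => hgmax ρ hρ.2)
    have hevg : deriv g =ᶠ[𝓝 rb] fun ρ => c₁ * (Real.exp (-(α * ρ)) * -α) - deriv f ρ := by
      filter_upwards [hVopen.mem_nhds hrbV] with ρ hρ
      exact ((hEd ρ).sub (hfdiff ρ hρ)).deriv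
    have hdd2 : deriv (deriv g) rb
        = c₁ * (Real.exp (-(α * rb)) * -α * -α) - deriv (deriv f) rb := by
      rw [hevg.deriv_eq]
      exact (hE2.sub hf'').deriv
    have hf2 : c₁ * Real.exp (-(α * rb)) * α * α ≤ deriv (deriv f) rb := by
      have h := hdd
      rw [hdd2] at h
      have hring : c₁ * (Real.exp (-(α * rb)) * -α * -α)
          = c₁ * Real.exp (-(α * rb)) * α * α := by ring
      linarith only [h, hring.le, hring.ge]
    -- use the PDE
    have hpde := hu.pde rb hrb0 tb htbIoo
    rw [← hfdef] at hpde
    set ut : ℝ := deriv (fun τ => u rb τ) tb with hutdef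
    set Q : ℝ := c₁ * Real.exp (-(α * rb)) with hQdef
    have hQ : 0 < Q := mul_pos hc₁ (Real.exp_pos _)
    have hut : δ * Q ≤ ut := by
      have hco := hcoth2 rb hrbK.1
      have h1 : δ * Q ≤ (α * α - ((N:ℝ) - 1) * (Real.cosh rb / Real.sinh rb) * α) * Q :=
        mul_le_mul_of_nonneg_right hco (le_of_lt hQ)
      rw [hfr] at hpde
      have e1 : (α * α - ((N:ℝ) - 1) * (Real.cosh rb / Real.sinh rb) * α) * Q
          = Q * α * α + ((N:ℝ) - 1) * (Real.cosh rb / Real.sinh rb) * (Q * -α) := by ring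
      linarith only [h1, hf2, hpde, e1.le, e1.ge]
    -- time derivative at the max point
    have hFt : HasDerivAt (fun τ => u rb τ) ut tb := by
      have hcd : ContDiffAt ℝ ((⊤:ℕ∞)) (fun τ : ℝ => u rb τ) tb :=
        (hCAt _ hmem).comp tb (contDiffAt_const.prodMk contDiffAt_id)
      exact (hcd.differentiableAt (by simp)).hasDerivAt
    have hvt : HasDerivAt (fun τ => u rb τ ^ m) (ut * m * u rb tb ^ (m - 1)) tb :=
      hFt.rpow_const (Or.inl (ne_of_gt hupos))
    have hsubd : HasDerivAt (fun τ : ℝ => τ - t0) 1 tb := (hasDerivAt_id tb).sub_const t0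
    have hpowd : HasDerivAt (fun τ : ℝ => (τ - t0) ^ b) (1 * b * (tb - t0) ^ (b - 1)) tb :=
      hsubd.rpow_const (Or.inl (ne_of_gt (by linarith : (0:ℝ) < tb - t0)))
    have hφt : HasDerivAt (fun τ => A * (τ - t0) ^ b * Real.exp (-(α * rb)))
        (A * (1 * b * (tb - t0) ^ (b - 1)) * Real.exp (-(α * rb))) tb :=
      (hpowd.const_mul A).mul_const _
    have hψ : HasDerivAt (fun τ => w rb τ)
        (A * (1 * b * (tb - t0) ^ (b - 1)) * Real.exp (-(α * rb))
          - ut * m * u rb tb ^ (m - 1)) tb := by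
      simp only [hwdef]
      exact hφt.sub hvt
    have htimemax : ∀ s ∈ Set.Icc t0 tb, (fun τ => w rb τ) s ≤ (fun τ => w rb τ) tb :=
      fun s hs => hglob rb hrbK.1 s ⟨hs.1, le_trans hs.2 htbK.2⟩
    have hψ0 : 0 ≤ A * (1 * b * (tb - t0) ^ (b - 1)) * Real.exp (-(α * rb))
        - ut * m * u rb tb ^ (m - 1) :=
      deriv_nonneg_of_left_max htb htimemax hψ
    -- final contradiction
    set uv : ℝ := u rb tb with huvdef
    have hsmall : uv ^ m < Q := by
      have h := hMpos
      simp only [hwdef] at h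
      rw [← hc₁def, ← hQdef] at h
      linarith only [h]
    have huvφ : uv < Q ^ m⁻¹ := by
      have h1 : (uv ^ m) ^ m⁻¹ < Q ^ m⁻¹ :=
        Real.rpow_lt_rpow (Real.rpow_nonneg (le_of_lt hupos) m) hsmall (inv_pos.2 hm0)
      rwa [Real.rpow_rpow_inv (le_of_lt hupos) (ne_of_gt hm0)] at h1
    have hpowlt : (Q ^ m⁻¹) ^ (m - 1) < uv ^ (m - 1) :=
      Real.rpow_lt_rpow_of_neg hupos huvφ (by linarith)
    have hkey : A * b * (tb - t0) ^ (b - 1) * Real.exp (-(α * rb))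
        ≤ δ * Q * (m * (Q ^ m⁻¹) ^ (m - 1)) := by
      have hq1 : Real.exp (-(α * rb)) ≤ 1 :=
        Real.exp_le_one_iff.2 (by linarith only [mul_pos hα0 hrb0])
      have hk := key_barrier_ineq hm0 hm1 hbdef hδ hA
        (by linarith : (0:ℝ) < tb - t0) (Real.exp_pos _) hq1 hAδ
      have hQeq : A * (tb - t0) ^ b * Real.exp (-(α * rb)) = Q := by
        rw [hQdef, hc₁def]
      rw [hQeq] at hk
      exact hk
    have hQm : 0 < m * uv ^ (m - 1) := mul_pos hm0 (Real.rpow_pos_of_pos hupos _)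
    have hchain1 : δ * Q * (m * uv ^ (m - 1)) ≤ ut * (m * uv ^ (m - 1)) :=
      mul_le_mul_of_nonneg_right hut (le_of_lt hQm)
    have hchain2 : δ * Q * (m * (Q ^ m⁻¹) ^ (m - 1)) < δ * Q * (m * uv ^ (m - 1)) := by
      have h1 : m * (Q ^ m⁻¹) ^ (m - 1) < m * uv ^ (m - 1) :=
        mul_lt_mul_of_pos_left hpowlt hm0
      exact mul_lt_mul_of_pos_left h1 (mul_pos hδ hQ)
    have hfin : ut * (m * uv ^ (m - 1)) ≤ A * b * (tb - t0) ^ (b - 1) * Real.exp (-(α * rb)) := by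
      have hre : A * (1 * b * (tb - t0) ^ (b - 1)) * Real.exp (-(α * rb))
          - ut * m * uv ^ (m - 1)
          = A * b * (tb - t0) ^ (b - 1) * Real.exp (-(α * rb)) - ut * (m * uv ^ (m - 1)) := by
        ring
      linarith only [hψ0, hre.le, hre.ge]
    linarith only [hkey, hchain1, hchain2, hfin]
  -- conclusion
  have hcont2 : ContinuousOn (fun r => u r ts) (Set.Icc 0 r₀) := by
    have hmap : Set.MapsTo (fun r : ℝ => (r, ts)) (Set.Icc 0 r₀) (Set.Ici 0 ×ˢ Set.Icc 0 T) :=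
      fun r hr => ⟨hr.1, ⟨le_of_lt hts0, le_of_lt htsT⟩⟩
    exact hu.continuousOn.comp ((continuous_id.prodMk continuous_const).continuousOn) hmap
  obtain ⟨rν, hrν, hνmin⟩ := isCompact_Icc.exists_isMinOn
    ⟨0, Set.left_mem_Icc.2 (le_of_lt hr₀0)⟩ hcont2
  set ν : ℝ := u rν ts with hνdef
  have hν : 0 < ν := hu.pos rν hrν.1 ts ⟨hts0, htsT⟩
  have htsmem : ts ∈ Set.Icc t0 t1 := ⟨le_of_lt ht0ts, le_of_lt htst1⟩
  have hQ0 : (0:ℝ) < A * (ts - t0) ^ b :=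
    mul_pos hA (Real.rpow_pos_of_pos (by linarith) b)
  set P : ℝ := min ν ((A * (ts - t0) ^ b) ^ m⁻¹) with hPdef
  have hP : 0 < P := lt_min hν (Real.rpow_pos_of_pos hQ0 _)
  refine ⟨P, hP, ?_⟩
  intro r hr
  have hrI : (0:ℝ) ≤ r := hr
  have hexparg : -α * r / m = -(α * r) * m⁻¹ := by ring
  by_cases hrr : r ≤ r₀
  · have h1 : ν ≤ u r ts := hνmin ⟨hrI, hrr⟩
    have h2 : Real.exp (-α * r / m) ≤ 1 := by
      apply Real.exp_le_one_iff.2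
      rw [hexparg]
      apply mul_nonpos_of_nonpos_of_nonneg (by nlinarith) (by positivity)
    calc P * Real.exp (-α * r / m) ≤ P * 1 :=
          mul_le_mul_of_nonneg_left h2 (le_of_lt hP)
      _ = P := mul_one P
      _ ≤ ν := min_le_left _ _
      _ ≤ u r ts := h1
  · push_neg at hrr
    have hc := comp r (le_of_lt hrr) ts htsmem
    have hu0 : (0:ℝ) ≤ u r ts := hu.nonneg r hrI ts ⟨le_of_lt hts0, le_of_lt htsT⟩
    have h3 : (A * (ts - t0) ^ b * Real.exp (-(α * r))) ^ m⁻¹ ≤ (u r ts ^ m) ^ m⁻¹ :=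
      Real.rpow_le_rpow (by positivity) hc (by positivity)
    rw [Real.rpow_rpow_inv hu0 (ne_of_gt hm0)] at h3
    have h4 : (A * (ts - t0) ^ b * Real.exp (-(α * r))) ^ m⁻¹
        = (A * (ts - t0) ^ b) ^ m⁻¹ * Real.exp (-α * r / m) := by
      rw [Real.mul_rpow (le_of_lt hQ0) (le_of_lt (Real.exp_pos _)), hexparg, Real.exp_mul]
    rw [h4] at h3
    calc P * Real.exp (-α * r / m) ≤ (A * (ts - t0) ^ b) ^ m⁻¹ * Real.exp (-α * r / m) :=
          mul_le_mul_of_nonneg_right (min_le_right _ _) (le_of_lt (Real.exp_pos _))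
      _ ≤ u r ts := h3
end

section
/- Asymptotics of derivatives of powers: fix an integer N ≥ 2, let V : (0,∞) → (0,∞) be a smooth strictly positive function, and suppose there exists l > 0 such that lim_{r→∞} e^{(N−1)r} (dᵏV/drᵏ)(r) = (−1)ᵏ (N−1)ᵏ l for every integer k ≥ 0. Then for every real α ≠ 0 and every integer k ≥ 1, lim_{r→∞} ( dᵏ/drᵏ V(r)^α ) / V(r)^α = ( −α(N−1) )ᵏ. -/
open Filter Topology MvPolynomial

/-- The derivation on `MvPolynomial ℕ ℝ` sending `X j ↦ X (j+1) - X 1 * X j`,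
mirroring the derivative rule for `g_j = V^{(j)}/V`. -/
noncomputable def derivPowAux : Derivation ℝ (MvPolynomial ℕ ℝ) (MvPolynomial ℕ ℝ) :=
  MvPolynomial.mkDerivation ℝ (fun j => X (j + 1) - X 1 * X j)

/-- The polynomial expressing `(V^α)^{(k)} / V^α` in terms of the `g_j`. -/
noncomputable def powPoly (α : ℝ) : ℕ → MvPolynomial ℕ ℝ
  | 0 => 1
  | k + 1 => derivPowAux (powPoly α k) + C α * (X 1 * powPoly α k)

/-- Asymptotics of derivatives of powers: if all derivatives of a smooth positive
function `V` satisfy `e^{(N-1)r} V^{(k)}(r) → (-1)^k (N-1)^k l` with `l > 0`, then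
`(d^k/dr^k V^α) / V^α → (-α(N-1))^k` as `r → ∞`. -/
theorem derivatives_of_powers_asymptotics
    (N : ℕ) (hN : 2 ≤ N) (V : ℝ → ℝ)
    (hpos : ∀ r > (0:ℝ), 0 < V r)
    (hsmooth : ContDiffOn ℝ (⊤ : ℕ∞) V (Set.Ioi 0))
    (hasymp : ∃ l > (0:ℝ), ∀ k : ℕ,
      Filter.Tendsto (fun r => Real.exp (((N : ℝ) - 1) * r) * iteratedDeriv k V r)
        Filter.atTop (nhds ((-1 : ℝ) ^ k * ((N : ℝ) - 1) ^ k * l)))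
    (α : ℝ) (hα : α ≠ 0) (k : ℕ) (hk : 1 ≤ k) :
    Filter.Tendsto (fun r => iteratedDeriv k (fun ρ => V ρ ^ α) r / V r ^ α)
      Filter.atTop (nhds ((-α * ((N : ℝ) - 1)) ^ k)) := by
  obtain ⟨l, hl, hasymp⟩ := hasymp
  set c : ℝ := -((N : ℝ) - 1) with hc
  -- the functions g_j = V^{(j)} / V
  set g : ℕ → ℝ → ℝ := fun j r => iteratedDeriv j V r / V r with hg
  -- iterated derivatives have derivatives on Ioi 0
  have key : ∀ (j : ℕ) (r : ℝ), 0 < r →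
      HasDerivAt (iteratedDeriv j V) (iteratedDeriv (j + 1) V r) r := by
    intro j r hr
    have hmem : Set.Ioi (0:ℝ) ∈ nhds r := isOpen_Ioi.mem_nhds hr
    have heq : iteratedDeriv j V =ᶠ[nhds r] iteratedDerivWithin j V (Set.Ioi 0) := by
      filter_upwards [hmem] with x hx
      simp [iteratedDeriv, iteratedDerivWithin,
        iteratedFDerivWithin_of_isOpen j isOpen_Ioi hx]
    have hjlt : (j : WithTop ℕ∞) < ((⊤ : ℕ∞) : WithTop ℕ∞) := by exact_mod_cast ENat.coe_lt_top j
    have hd : DifferentiableWithinAt ℝ (iteratedDerivWithin j V (Set.Ioi 0)) (Set.Ioi 0) r :=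
      (hsmooth.differentiableOn_iteratedDerivWithin hjlt isOpen_Ioi.uniqueDiffOn) r hr
    have hd2 : DifferentiableAt ℝ (iteratedDeriv j V) r :=
      (hd.differentiableAt hmem).congr_of_eventuallyEq heq
    rw [iteratedDeriv_succ]
    exact hd2.hasDerivAt
  -- derivative of g_j
  have hgderiv : ∀ (j : ℕ) (r : ℝ), 0 < r →
      HasDerivAt (g j) (g (j + 1) r - g 1 r * g j r) r := by
    intro j r hr
    have hVne : V r ≠ 0 := (hpos r hr).ne'
    have h : HasDerivAt (fun y => iteratedDeriv j V y / iteratedDeriv 0 V y) _ r := (key j r hr).fun_div (key 0 r hr) (by simpa [iteratedDeriv_zero] using hVne)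
    have h1 : iteratedDeriv 0 V = V := iteratedDeriv_zero
    have h2 : (0:ℕ) + 1 = 1 := rfl
    rw [h1, h2] at h
    convert h using 1
    simp only [hg]
    field_simp
  -- derivative of polynomial evaluations
  have hpderiv : ∀ (p : MvPolynomial ℕ ℝ) (r : ℝ), 0 < r →
      HasDerivAt (fun s => eval (fun j => g j s) p)
        (eval (fun j => g j r) (derivPowAux p)) r := by
    intro p
    induction p using MvPolynomial.induction_on with
    | C a =>
      intro r hr
      simpa using hasDerivAt_const r a
    | add p q hp hq =>
      intro r hr
      simpa using (hp r hr).fun_add (hq r hr)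
    | mul_X p j hp =>
      intro r hr
      have hD : derivPowAux (p * X j) = p * (X (j + 1) - X 1 * X j) + X j * derivPowAux p := by
        unfold derivPowAux
        rw [Derivation.leibniz, mkDerivation_X, smul_eq_mul, smul_eq_mul]
      have : HasDerivAt (fun i => eval (fun j => g j i) p * g j i) _ r := (hp r hr).fun_mul (hgderiv j r hr)
      convert this using 1
      · simp
      · rw [hD]
        simp only [map_add, map_mul, map_sub, eval_add, eval_mul, eval_sub, eval_X]
        ring
  -- limits of g_j
  have hglim : ∀ j : ℕ, Tendsto (g j) atTop (nhds (c ^ j)) := by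
    intro j
    have hde : g j = fun r => (Real.exp (((N : ℝ) - 1) * r) * iteratedDeriv j V r) /
        (Real.exp (((N : ℝ) - 1) * r) * iteratedDeriv 0 V r) := by
      funext r
      rw [mul_div_mul_left _ _ (Real.exp_ne_zero _), iteratedDeriv_zero]
    rw [hde]
    have := (hasymp j).div (hasymp 0) (by simpa using hl.ne')
    convert this using 2
    · rfl
    rw [hc, neg_pow]
    field_simp
  -- limits of polynomial evaluations
  have hplim : ∀ p : MvPolynomial ℕ ℝ,
      Tendsto (fun r => eval (fun j => g j r) p) atTop
        (nhds (eval (fun j => c ^ j) p)) := by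
    intro p
    induction p using MvPolynomial.induction_on with
    | C a => simpa using tendsto_const_nhds
    | add p q hp hq => simpa using hp.add hq
    | mul_X p j hp => simpa using hp.mul (hglim j)
  -- evaluation of derivation at the limit point is zero
  have hvalD : ∀ p : MvPolynomial ℕ ℝ, eval (fun j => c ^ j) (derivPowAux p) = 0 := by
    intro p
    induction p using MvPolynomial.induction_on with
    | C a => simp [derivPowAux]
    | add p q hp hq => simp [hp, hq]
    | mul_X p j hp =>
      have hD : derivPowAux (p * X j) = p * (X (j + 1) - X 1 * X j) + X j * derivPowAux p := by
        unfold derivPowAux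
        rw [Derivation.leibniz, mkDerivation_X, smul_eq_mul, smul_eq_mul]
      rw [hD]
      simp only [map_add, eval_add, eval_mul, eval_sub, eval_X, hp]
      ring
  -- value of powPoly at the limit point
  have hvalF : ∀ m : ℕ, eval (fun j => c ^ j) (powPoly α m) = (α * c) ^ m := by
    intro m
    induction m with
    | zero => simp [powPoly]
    | succ m ih =>
      simp only [powPoly, map_add, map_mul, hvalD, ih, eval_C, eval_X, eval_mul, zero_add,
        pow_one]
      ring
  -- the key identity: iteratedDeriv m (V^α) = V^α * eval g (powPoly α m) on Ioi 0
  have hiter : ∀ (m : ℕ) (r : ℝ), 0 < r →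
      iteratedDeriv m (fun ρ => V ρ ^ α) r
        = V r ^ α * eval (fun j => g j r) (powPoly α m) := by
    intro m
    induction m with
    | zero => intro r hr; simp [powPoly]
    | succ m ih =>
      intro r hr
      have hmem : Set.Ioi (0:ℝ) ∈ nhds r := isOpen_Ioi.mem_nhds hr
      have heq : iteratedDeriv m (fun ρ => V ρ ^ α)
          =ᶠ[nhds r] fun s => V s ^ α * eval (fun j => g j s) (powPoly α m) := by
        filter_upwards [hmem] with x hx
        exact ih x hx
      rw [iteratedDeriv_succ, heq.deriv_eq]
      have hVpos := hpos r hr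
      have hV1 : HasDerivAt V (iteratedDeriv 1 V r) r := by
        have := key 0 r hr
        rwa [iteratedDeriv_zero] at this
      have hVa : HasDerivAt (fun s => V s ^ α) (α * V r ^ (α - 1) * iteratedDeriv 1 V r) r := by
        have := hV1.rpow_const (p := α) (Or.inl hVpos.ne')
        convert this using 1
        ring
      have hprod := hVa.mul (hpderiv (powPoly α m) r hr)
      rw [show (fun s => V s ^ α * eval (fun j => g j s) (powPoly α m)) = ((fun s => V s ^ α) * fun s => eval (fun j => g j s) (powPoly α m)) from rfl, hprod.deriv]
      have hpow : V r ^ (α - 1) = V r ^ α / V r := by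
        rw [Real.rpow_sub hVpos, Real.rpow_one]
      have alg : ∀ v va w e ed : ℝ, v ≠ 0 →
          α * (va / v) * w * e + va * ed = va * (ed + α * (w / v * e)) := by
        intro v va w e ed hv
        field_simp
        ring
      rw [hpow]
      simp only [powPoly, map_add, map_mul, eval_add, eval_mul, eval_C, eval_X]
      exact alg (V r) (V r ^ α) (iteratedDeriv 1 V r) _ _ hVpos.ne'
  -- conclude
  have hfinal : Tendsto (fun r => eval (fun j => g j r) (powPoly α k)) atTop
      (nhds ((α * c) ^ k)) := by
    rw [← hvalF k]; exact hplim (powPoly α k)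
  have hEq : (fun r => iteratedDeriv k (fun ρ => V ρ ^ α) r / V r ^ α)
      =ᶠ[atTop] fun r => eval (fun j => g j r) (powPoly α k) := by
    filter_upwards [eventually_gt_atTop (0:ℝ)] with r hr
    rw [hiter k r hr]
    have : V r ^ α ≠ 0 := (Real.rpow_pos_of_pos (hpos r hr) α).ne'
    field_simp
  rw [show (-α * ((N:ℝ) - 1)) = α * c by rw [hc]; ring]
  exact hfinal.congr' hEq.symm
end
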